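/- Let p ∈ (0,1), |ψ⟩ = √p|0⟩ + √(1−p)|1⟩, ρ₀ = |ψ⟩⟨ψ|, and ρ₁ = ½I the maximally mixed qubit state. For ε ∈ (0,1) and n ≥ 1, let β_n(ε) = inf{ Tr(Z[ρ₁^{⊗n}] E) : E Hermitian on (ℂ²)^{⊗n}, 0 ≤ E ≤ I, Tr(Z[ρ₀^{⊗n}] E) ≥ 1−ε } and D_H^ε(Z[ρ₀^{⊗n}] || Z[ρ₁^{⊗n}]) = −log₂ β_n(ε). Then lim_{n→∞} D_H^ε(Z[ρ₀^{⊗n}] || Z[ρ₁^{⊗n}]) / n = 1. -/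

import Mathlib

open Matrix Complex Set Filter

noncomputable section

/-- Number of 1s in a bit string. -/
def ones {n : ℕ} (x : Fin n → Fin 2) : ℕ := (Finset.univ.filter fun i => x i = 1).card

/-- The `n`-fold tensor power of a one-qubit operator, as a matrix indexed by bit strings. -/
def mpow (n : ℕ) (ρ : Matrix (Fin 2) (Fin 2) ℂ) :
    Matrix (Fin n → Fin 2) (Fin n → Fin 2) ℂ :=
  Matrix.of fun x y => ∏ i, ρ (x i) (y i)

/-- The parity operator ω = σ_z^{⊗n}: it multiplies a computational basis vector by
(-1)^(number of 1s). -/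
def parityOp (n : ℕ) : Matrix (Fin n → Fin 2) (Fin n → Fin 2) ℂ :=
  Matrix.diagonal fun x => (-1 : ℂ) ^ ones x

/-- The ℤ₂-twirling Z[X] = ½ (X + ωXω). -/
def twirl {n : ℕ} (X : Matrix (Fin n → Fin 2) (Fin n → Fin 2) ℂ) :
    Matrix (Fin n → Fin 2) (Fin n → Fin 2) ℂ :=
  (2 : ℂ)⁻¹ • (X + parityOp n * X * parityOp n)

/-- Rank-one projection |ψ⟩⟨ψ| on one qubit. -/
def projv (ψ : Fin 2 → ℂ) : Matrix (Fin 2) (Fin 2) ℂ := vecMulVec ψ (star ψ)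

/-- Rank-one projection |ψ⟩⟨ψ| on n qubits. -/
def projN {n : ℕ} (ψ : (Fin n → Fin 2) → ℂ) :
    Matrix (Fin n → Fin 2) (Fin n → Fin 2) ℂ := vecMulVec ψ (star ψ)

def ket0 : Fin 2 → ℂ := ![1, 0]

def ket1 : Fin 2 → ℂ := ![0, 1]

/-- The qubit state √p |0⟩ + e^{iφ} √(1-p) |1⟩. -/
def qubit (p φ : ℝ) : Fin 2 → ℂ :=
  ![(Real.sqrt p : ℂ), Complex.exp (Complex.I * φ) * (Real.sqrt (1 - p) : ℂ)]

/-- The qubit state √p |0⟩ + √(1-p) |1⟩. -/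
def qubitR (p : ℝ) : Fin 2 → ℂ := ![(Real.sqrt p : ℂ), (Real.sqrt (1 - p) : ℂ)]

open scoped ComplexOrder

/-- The set of type-II error probabilities Tr(σ₁ E) over POVM elements 0 ≤ E ≤ I
(Loewner order) whose type-I error is at most ε, i.e. Tr(σ₀ E) ≥ 1-ε. -/
def errSet (n : ℕ) (σ0 σ1 : Matrix (Fin n → Fin 2) (Fin n → Fin 2) ℂ) (ε : ℝ) : Set ℝ :=
  { x | ∃ E : Matrix (Fin n → Fin 2) (Fin n → Fin 2) ℂ,
      E.IsHermitian ∧ E.PosSemidef ∧ (1 - E).PosSemidef ∧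
      1 - ε ≤ ((σ0 * E).trace).re ∧ x = ((σ1 * E).trace).re }

/-- The maximally mixed qubit state ½ I. -/
def mmix : Matrix (Fin 2) (Fin 2) ℂ := (2 : ℂ)⁻¹ • 1


/-!
Write `a = ψ^{⊗n}` and `b = ω a`. Then `Z[ρ₀^{⊗n}] = ½ (|a⟩⟨a| + |b⟩⟨b|)` with overlap
`c = |⟨a|b⟩| = |2p - 1|^n → 0`, while `Z[ρ₁^{⊗n}] = 2^{-n} I`. By Cauchy–Schwarz,
`|a⟩⟨a| + |b⟩⟨b| ≤ (1 + c) I`. Hence `Z[ρ₀^{⊗n}] ≤ I`, so every admissible test has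
`Tr E ≥ 1 - ε` and `β_n(ε) ≥ (1 - ε) 2^{-n}`; conversely the test
`E = (|a⟩⟨a| + |b⟩⟨b|) / (1 + c)` accepts `Z[ρ₀^{⊗n}]` with probability `(1 + c²)/(1 + c) ≥ 1 - c`
and has type-II error at most `2 · 2^{-n}`. Thus `-log₂ β_n(ε) = n + O(1)`.
-/

open scoped InnerProductSpace

theorem norm_inner_sq_add_norm_inner_sq_le {𝕜 E : Type*} [RCLike 𝕜] [NormedAddCommGroup E]
    [InnerProductSpace 𝕜 E] {u v : E} (hu : ‖u‖ = 1) (hv : ‖v‖ = 1) (x : E) :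
    ‖⟪u, x⟫_𝕜‖ ^ 2 + ‖⟪v, x⟫_𝕜‖ ^ 2 ≤ (1 + ‖⟪u, v⟫_𝕜‖) * ‖x‖ ^ 2 := by
  set α := ⟪u, x⟫_𝕜
  set β := ⟪v, x⟫_𝕜
  set S := ‖α‖ ^ 2 + ‖β‖ ^ 2
  set y := α • u + β • v
  -- Cauchy–Schwarz for `⟪y, x⟫ = S` together with `‖y‖² ≤ (1 + |⟪u, v⟫|) S`.
  have hyx : ⟪y, x⟫_𝕜 = (S : 𝕜) := by
    rw [inner_add_left, inner_smul_left, inner_smul_left, RCLike.conj_mul, RCLike.conj_mul]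
    push_cast [S]; rfl
  have hcross : RCLike.re ⟪α • u, β • v⟫_𝕜 ≤ ‖⟪u, v⟫_𝕜‖ * S / 2 := by
    calc RCLike.re ⟪α • u, β • v⟫_𝕜 ≤ ‖⟪α • u, β • v⟫_𝕜‖ := RCLike.re_le_norm _
      _ = ‖α‖ * ‖β‖ * ‖⟪u, v⟫_𝕜‖ := by
        rw [inner_smul_left, inner_smul_right, norm_mul, norm_mul, RCLike.norm_conj, mul_assoc]
      _ ≤ ‖⟪u, v⟫_𝕜‖ * S / 2 := by
        nlinarith [sq_nonneg (‖α‖ - ‖β‖), norm_nonneg ⟪u, v⟫_𝕜]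
  have hyy : ‖y‖ ^ 2 ≤ (1 + ‖⟪u, v⟫_𝕜‖) * S := by
    have := norm_add_sq (𝕜 := 𝕜) (α • u) (β • v)
    rw [norm_smul, norm_smul, hu, hv] at this
    simp only [y, S, this]
    nlinarith
  have hS : S ^ 2 ≤ (1 + ‖⟪u, v⟫_𝕜‖) * S * ‖x‖ ^ 2 := by
    calc S ^ 2 = ‖⟪y, x⟫_𝕜‖ ^ 2 := by
          rw [hyx, RCLike.norm_ofReal, sq_abs]
      _ ≤ (‖y‖ * ‖x‖) ^ 2 := by gcongr; exact norm_inner_le_norm y x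
      _ ≤ (1 + ‖⟪u, v⟫_𝕜‖) * S * ‖x‖ ^ 2 := by rw [mul_pow]; gcongr
  rcases (show 0 ≤ S by positivity).eq_or_lt with hS0 | hS0
  · rw [← hS0]; positivity
  · nlinarith

theorem Matrix.PosSemidef.re_trace_mul_nonneg {𝕜 m : Type*} [RCLike 𝕜] [Fintype m]
    {A B : Matrix m m 𝕜} (hA : A.PosSemidef) (hB : B.PosSemidef) :
    0 ≤ RCLike.re (A * B).trace := by
  classical
  open scoped MatrixOrder in
  obtain ⟨C, rfl⟩ := CStarAlgebra.nonneg_iff_eq_star_mul_self.mp hA.nonneg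
  rw [star_eq_conjTranspose, Matrix.mul_assoc, trace_mul_comm]
  exact (RCLike.nonneg_iff.mp (hB.mul_mul_conjTranspose_same C).trace_nonneg).1

section RankOneProjections
variable {𝕜 m : Type*} [RCLike 𝕜] [Fintype m]

theorem star_dotProduct_vecMulVec_self_star_mulVec (u x : m → 𝕜) :
    star x ⬝ᵥ (vecMulVec u (star u) *ᵥ x) = ((‖star u ⬝ᵥ x‖ ^ 2 : ℝ) : 𝕜) := by
  rw [vecMulVec_mulVec, op_smul_eq_smul, dotProduct_smul, ← star_star u, star_dotProduct_star,
    star_star, smul_eq_mul, RCLike.star_def, RCLike.mul_conj, RCLike.ofReal_pow]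

theorem norm_star_dotProduct_comm (u v : m → 𝕜) : ‖star v ⬝ᵥ u‖ = ‖star u ⬝ᵥ v‖ := by
  rw [← star_star u, star_dotProduct_star, norm_star, star_star]

theorem trace_vecMulVec_self_star_mul (u : m → 𝕜) (X : Matrix m m 𝕜) :
    (vecMulVec u (star u) * X).trace = star u ⬝ᵥ (X *ᵥ u) := by
  rw [vecMulVec_mul, trace_vecMulVec, dotProduct_comm, dotProduct_mulVec]

theorem Matrix.IsHermitian.mul_vecMulVec_self_star_mul {M : Matrix m m 𝕜} (hM : M.IsHermitian)
    (a : m → 𝕜) : M * vecMulVec a (star a) * M = vecMulVec (M *ᵥ a) (star (M *ᵥ a)) := by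
  rw [mul_vecMulVec, vecMulVec_mul, star_mulVec, hM.eq]

theorem star_dotProduct_eq_inner (a b : m → 𝕜) :
    star a ⬝ᵥ b = ⟪WithLp.toLp 2 a, WithLp.toLp 2 b⟫_𝕜 := by
  rw [EuclideanSpace.inner_toLp_toLp, dotProduct_comm]

theorem norm_toLp_eq_one {u : m → 𝕜} (hu : star u ⬝ᵥ u = 1) : ‖WithLp.toLp 2 u‖ = 1 := by
  have h := inner_self_eq_norm_sq (𝕜 := 𝕜) (WithLp.toLp 2 u)
  rw [← star_dotProduct_eq_inner, hu, RCLike.one_re] at h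
  exact (pow_eq_one_iff_of_nonneg (norm_nonneg _) two_ne_zero).mp h.symm

variable {u v : m → 𝕜} (hu : star u ⬝ᵥ u = 1) (hv : star v ⬝ᵥ v = 1)
include hu hv

theorem norm_star_dotProduct_sq_add_le (x : m → 𝕜) :
    ‖star u ⬝ᵥ x‖ ^ 2 + ‖star v ⬝ᵥ x‖ ^ 2 ≤ (1 + ‖star u ⬝ᵥ v‖) * RCLike.re (star x ⬝ᵥ x) := by
  simpa only [star_dotProduct_eq_inner, inner_self_eq_norm_sq] using
    norm_inner_sq_add_norm_inner_sq_le (norm_toLp_eq_one hu) (norm_toLp_eq_one hv) _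

theorem norm_star_dotProduct_le_one : ‖star u ⬝ᵥ v‖ ≤ 1 := by
  simpa [star_dotProduct_eq_inner, norm_toLp_eq_one hu, norm_toLp_eq_one hv] using
    norm_inner_le_norm (𝕜 := 𝕜) (WithLp.toLp 2 u) (WithLp.toLp 2 v)

theorem trace_vecMulVec_add_vecMulVec :
    (vecMulVec u (star u) + vecMulVec v (star v)).trace = 2 := by
  rw [trace_add, trace_vecMulVec, trace_vecMulVec, dotProduct_comm, hu, dotProduct_comm, hv]
  norm_num

theorem trace_sq_vecMulVec_add_vecMulVec :
    ((vecMulVec u (star u) + vecMulVec v (star v)) *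
      (vecMulVec u (star u) + vecMulVec v (star v))).trace =
      ((2 * (1 + ‖star u ⬝ᵥ v‖ ^ 2) : ℝ) : 𝕜) := by
  simp only [add_mul, trace_add, trace_vecMulVec_self_star_mul, add_mulVec, dotProduct_add,
    star_dotProduct_vecMulVec_self_star_mulVec, hu, hv, norm_one, norm_star_dotProduct_comm u v]
  push_cast; ring

variable [DecidableEq m]

theorem posSemidef_one_sub_smul_add_vecMulVec {t : ℝ} (ht : 0 ≤ t)
    (htuv : t * (1 + ‖star u ⬝ᵥ v‖) ≤ 1) :
    (1 - (t : 𝕜) • (vecMulVec u (star u) + vecMulVec v (star v))).PosSemidef := by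
  have hP : (vecMulVec u (star u) + vecMulVec v (star v)).PosSemidef :=
    (posSemidef_vecMulVec_self_star u).add (posSemidef_vecMulVec_self_star v)
  refine .of_dotProduct_mulVec_nonneg
    (isHermitian_one.sub (hP.smul (RCLike.ofReal_nonneg.mpr ht)).1) fun x => ?_
  have hx : star x ⬝ᵥ x = ((RCLike.re (star x ⬝ᵥ x) : ℝ) : 𝕜) := by
    rw [star_dotProduct_eq_inner, inner_self_eq_norm_sq_to_K, ← RCLike.ofReal_pow,
      RCLike.ofReal_re]
  rw [sub_mulVec, one_mulVec, smul_mulVec, add_mulVec, dotProduct_sub, dotProduct_smul,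
    dotProduct_add, star_dotProduct_vecMulVec_self_star_mulVec,
    star_dotProduct_vecMulVec_self_star_mulVec, hx, smul_eq_mul]
  norm_cast
  rw [sub_nonneg]
  have hre := (RCLike.nonneg_iff.mp (dotProduct_star_self_nonneg x)).1
  calc t * (‖star u ⬝ᵥ x‖ ^ 2 + ‖star v ⬝ᵥ x‖ ^ 2)
      ≤ t * ((1 + ‖star u ⬝ᵥ v‖) * RCLike.re (star x ⬝ᵥ x)) :=
        mul_le_mul_of_nonneg_left (norm_star_dotProduct_sq_add_le hu hv x) ht
    _ = (t * (1 + ‖star u ⬝ᵥ v‖)) * RCLike.re (star x ⬝ᵥ x) := by ring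
    _ ≤ RCLike.re (star x ⬝ᵥ x) := mul_le_of_le_one_left hre htuv

end RankOneProjections

section TensorPower
variable {n : ℕ}

def tensorPowVec (n : ℕ) (f : Fin 2 → ℂ) : (Fin n → Fin 2) → ℂ := fun x => ∏ i, f (x i)

theorem mpow_mul (A B : Matrix (Fin 2) (Fin 2) ℂ) : mpow n (A * B) = mpow n A * mpow n B := by
  ext x y
  simp only [mpow, of_apply, mul_apply, Fintype.prod_sum, ← Finset.prod_mul_distrib]

theorem tensorPowVec_dotProduct (f g : Fin 2 → ℂ) :
    tensorPowVec n f ⬝ᵥ tensorPowVec n g = (f ⬝ᵥ g) ^ n := by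
  simp only [← Fin.prod_const, dotProduct, Fintype.prod_sum, tensorPowVec, Finset.prod_mul_distrib]

theorem star_tensorPowVec (f : Fin 2 → ℂ) : star (tensorPowVec n f) = tensorPowVec n (star f) := by
  ext x
  simp [tensorPowVec]

theorem star_tensorPowVec_dotProduct (f g : Fin 2 → ℂ) :
    star (tensorPowVec n f) ⬝ᵥ tensorPowVec n g = (star f ⬝ᵥ g) ^ n := by
  rw [star_tensorPowVec, tensorPowVec_dotProduct]

theorem mpow_vecMulVec (f g : Fin 2 → ℂ) :
    mpow n (vecMulVec f g) = vecMulVec (tensorPowVec n f) (tensorPowVec n g) := by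
  ext x y
  simp only [mpow, tensorPowVec, of_apply, vecMulVec_apply, Finset.prod_mul_distrib]

theorem mpow_projv (f : Fin 2 → ℂ) : mpow n (projv f) = projN (tensorPowVec n f) := by
  rw [projv, projN, mpow_vecMulVec, star_tensorPowVec]

theorem mpow_one : mpow n 1 = 1 := by
  ext x y
  simp [mpow, one_apply, Fintype.prod_boole, funext_iff]

theorem mpow_smul (c : ℂ) (A : Matrix (Fin 2) (Fin 2) ℂ) : mpow n (c • A) = c ^ n • mpow n A := by
  ext x y
  simp only [mpow, of_apply, Matrix.smul_apply, smul_eq_mul, Finset.prod_mul_distrib,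
    Fin.prod_const]

def pauliZ : Matrix (Fin 2) (Fin 2) ℂ := diagonal ![1, -1]

theorem mpow_diagonal (d : Fin 2 → ℂ) : mpow n (diagonal d) = diagonal (tensorPowVec n d) := by
  ext x y
  simp [mpow, tensorPowVec, diagonal_apply, Fintype.prod_ite_zero, funext_iff]

theorem parityOp_eq_mpow_pauliZ : parityOp n = mpow n pauliZ := by
  rw [pauliZ, mpow_diagonal, parityOp]
  congr 1
  ext x
  rw [ones, ← Finset.prod_const (-1 : ℂ), Finset.prod_filter, tensorPowVec]
  refine Finset.prod_congr rfl fun i _ => ?_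
  generalize x i = j
  fin_cases j <;> simp

theorem pauliZ_mul_self : pauliZ * pauliZ = 1 := by
  ext i j; fin_cases i <;> fin_cases j <;> simp [pauliZ]

theorem isHermitian_pauliZ : pauliZ.IsHermitian := by
  rw [pauliZ, isHermitian_diagonal_iff]
  intro i
  fin_cases i <;> simp [isSelfAdjoint_iff]

theorem star_pauliZ_mulVec_dotProduct_pauliZ_mulVec (f g : Fin 2 → ℂ) :
    star (pauliZ *ᵥ f) ⬝ᵥ (pauliZ *ᵥ g) = star f ⬝ᵥ g := by
  rw [star_mulVec, ← dotProduct_mulVec, mulVec_mulVec, isHermitian_pauliZ.eq, pauliZ_mul_self,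
    one_mulVec]

theorem twirl_mpow_projv (ψ : Fin 2 → ℂ) :
    twirl (mpow n (projv ψ)) =
      (2 : ℂ)⁻¹ • (projN (tensorPowVec n ψ) + projN (tensorPowVec n (pauliZ *ᵥ ψ))) := by
  rw [twirl, parityOp_eq_mpow_pauliZ, ← mpow_mul, ← mpow_mul, projv,
    isHermitian_pauliZ.mul_vecMulVec_self_star_mul, ← projv, ← projv, mpow_projv, mpow_projv]

theorem twirl_smul_one (c : ℂ) :
    twirl (c • (1 : Matrix (Fin n → Fin 2) (Fin n → Fin 2) ℂ)) = c • 1 := by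
  rw [twirl, Matrix.mul_smul, Matrix.smul_mul, Matrix.mul_one, parityOp_eq_mpow_pauliZ, ← mpow_mul,
    pauliZ_mul_self, mpow_one, ← two_smul ℂ, smul_smul, inv_mul_cancel₀ two_ne_zero, one_smul]

theorem twirl_mpow_mmix : twirl (mpow n mmix) = (((2 : ℝ)⁻¹ ^ n : ℝ) : ℂ) • 1 := by
  rw [mmix, mpow_smul, mpow_one, twirl_smul_one]
  push_cast; rfl

end TensorPower

section Qubit
variable {p : ℝ}

theorem star_qubitR_dotProduct_self (hp0 : 0 ≤ p) (hp1 : p ≤ 1) :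
    star (qubitR p) ⬝ᵥ qubitR p = 1 := by
  simp [qubitR, dotProduct, Fin.sum_univ_two, ← Complex.ofReal_mul, Real.mul_self_sqrt hp0,
    Real.mul_self_sqrt (sub_nonneg.mpr hp1)]

theorem star_qubitR_dotProduct_pauliZ_mulVec (hp0 : 0 ≤ p) (hp1 : p ≤ 1) :
    star (qubitR p) ⬝ᵥ (pauliZ *ᵥ qubitR p) = ((2 * p - 1 : ℝ) : ℂ) := by
  have h0 : (√p : ℂ) * √p = p := by rw [← Complex.ofReal_mul, Real.mul_self_sqrt hp0]
  have h1 : (√(1 - p) : ℂ) * √(1 - p) = 1 - p := by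
    rw [← Complex.ofReal_mul, Real.mul_self_sqrt (sub_nonneg.mpr hp1), Complex.ofReal_sub,
      Complex.ofReal_one]
  simp only [dotProduct, Fin.sum_univ_two, Pi.star_apply, pauliZ, mulVec_diagonal, qubitR,
    cons_val_zero, cons_val_one, RCLike.star_def, Complex.conj_ofReal]
  push_cast
  linear_combination h0 - h1

end Qubit

section HypothesisTesting
variable {n : ℕ} {ε : ℝ}

theorem le_of_mem_errSet {σ : Matrix (Fin n → Fin 2) (Fin n → Fin 2) ℂ} (hσ : (1 - σ).PosSemidef)
    {s x : ℝ} (hs : 0 ≤ s) (hx : x ∈ errSet n σ ((s : ℂ) • 1) ε) : (1 - ε) * s ≤ x := by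
  obtain ⟨E, -, hE, -, hσE, rfl⟩ := hx
  have hle : (σ * E).trace.re ≤ E.trace.re := by
    have := hσ.re_trace_mul_nonneg hE
    rwa [Matrix.sub_mul, Matrix.one_mul, trace_sub, map_sub, RCLike.re_to_complex,
      RCLike.re_to_complex, sub_nonneg] at this
  rw [Matrix.smul_mul, Matrix.one_mul, trace_smul, smul_eq_mul, Complex.re_ofReal_mul]
  nlinarith

theorem mem_errSet_of_norm_dotProduct_le {a b : (Fin n → Fin 2) → ℂ} (ha : star a ⬝ᵥ a = 1)
    (hb : star b ⬝ᵥ b = 1) (hab : ‖star a ⬝ᵥ b‖ ≤ ε) (s : ℝ) :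
    2 * s / (1 + ‖star a ⬝ᵥ b‖) ∈ errSet n ((2 : ℂ)⁻¹ • (projN a + projN b)) ((s : ℂ) • 1) ε := by
  set c := ‖star a ⬝ᵥ b‖ with hc_def
  have hc : 0 < 1 + c := by positivity
  set t := (1 + c)⁻¹
  have ht : 0 ≤ t := inv_nonneg.mpr hc.le
  have hsuccess : 1 - ε ≤ t * (1 + c ^ 2) := by
    rw [inv_mul_eq_div, le_div_iff₀ hc]
    nlinarith [sq_nonneg c]
  have hE := ((posSemidef_vecMulVec_self_star a).add (posSemidef_vecMulVec_self_star b)).smul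
    (Complex.zero_le_real.mpr ht)
  refine ⟨(t : ℂ) • (projN a + projN b), hE.1, hE,
    posSemidef_one_sub_smul_add_vecMulVec ha hb ht (inv_mul_cancel₀ hc.ne').le, ?_, ?_⟩
  · rw [Matrix.smul_mul, Matrix.mul_smul, trace_smul, trace_smul, projN, projN,
      trace_sq_vecMulVec_add_vecMulVec ha hb, ← hc_def, RCLike.ofReal_eq_complex_ofReal]
    have htrace :
        (2 : ℂ)⁻¹ • (t : ℂ) • ((2 * (1 + c ^ 2) : ℝ) : ℂ) = ((t * (1 + c ^ 2) : ℝ) : ℂ) := by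
      simp only [smul_eq_mul]; push_cast; ring
    rwa [htrace, Complex.ofReal_re]
  · rw [Matrix.smul_mul, Matrix.one_mul, trace_smul, trace_smul, projN, projN,
      trace_vecMulVec_add_vecMulVec ha hb, smul_eq_mul, smul_eq_mul]
    norm_cast
    ring

theorem sInf_errSet_mem_Icc {a b : (Fin n → Fin 2) → ℂ} (ha : star a ⬝ᵥ a = 1)
    (hb : star b ⬝ᵥ b = 1) (hab : ‖star a ⬝ᵥ b‖ ≤ ε) {s : ℝ} (hs : 0 ≤ s) :
    sInf (errSet n ((2 : ℂ)⁻¹ • (projN a + projN b)) ((s : ℂ) • 1) ε) ∈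
      Icc ((1 - ε) * s) (2 * s) := by
  have hσ : (1 - (2 : ℂ)⁻¹ • (projN a + projN b)).PosSemidef := by
    have := posSemidef_one_sub_smul_add_vecMulVec ha hb (t := 2⁻¹) (by norm_num)
      (by linarith [norm_star_dotProduct_le_one ha hb])
    rwa [RCLike.ofReal_eq_complex_ofReal, Complex.ofReal_inv, Complex.ofReal_ofNat] at this
  have hmem := mem_errSet_of_norm_dotProduct_le ha hb hab s
  have hlower : ∀ x ∈ errSet n ((2 : ℂ)⁻¹ • (projN a + projN b)) ((s : ℂ) • 1) ε,
      (1 - ε) * s ≤ x := fun _ => le_of_mem_errSet hσ hs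
  refine ⟨le_csInf ⟨_, hmem⟩ hlower, (csInf_le ⟨_, hlower⟩ hmem).trans ?_⟩
  exact div_le_self (by positivity) (le_add_of_nonneg_right (norm_nonneg _))

end HypothesisTesting

theorem Real.logb_mul_inv_pow_self {b c : ℝ} (hb : 1 < b) (hc : 0 < c) (n : ℕ) :
    Real.logb b (c * b⁻¹ ^ n) = Real.logb b c - n := by
  rw [Real.logb_mul hc.ne' (by positivity), Real.logb_pow, Real.logb_inv, Real.logb_self_eq_one hb]
  ring

theorem tendsto_neg_logb_div_of_mem_Icc {β : ℕ → ℝ} {c₁ c₂ : ℝ} (hc₁ : 0 < c₁)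
    (hβ : ∀ᶠ n in atTop, β n ∈ Icc (c₁ * 2⁻¹ ^ n) (c₂ * 2⁻¹ ^ n)) :
    Tendsto (fun n : ℕ => -Real.logb 2 (β n) / n) atTop (nhds 1) := by
  have hlim (C : ℝ) : Tendsto (fun n : ℕ => 1 - C / n) atTop (nhds 1) := by
    simpa using tendsto_const_nhds.sub (tendsto_const_div_atTop_nhds_zero_nat C)
  have hbounds : ∀ᶠ n : ℕ in atTop, 1 - Real.logb 2 c₂ / n ≤ -Real.logb 2 (β n) / n ∧
      -Real.logb 2 (β n) / n ≤ 1 - Real.logb 2 c₁ / n := by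
    filter_upwards [hβ, eventually_gt_atTop 0] with n ⟨h₁, h₂⟩ hn
    have hpos : 0 < c₁ * 2⁻¹ ^ n := by positivity
    have hc₂ : 0 < c₂ := pos_of_mul_pos_left (hpos.trans_le (h₁.trans h₂)) (by positivity)
    have hl₁ := Real.logb_le_logb_of_le one_lt_two hpos h₁
    have hl₂ := Real.logb_le_logb_of_le one_lt_two (hpos.trans_le h₁) h₂
    rw [Real.logb_mul_inv_pow_self one_lt_two hc₁] at hl₁
    rw [Real.logb_mul_inv_pow_self one_lt_two hc₂] at hl₂
    have hn' : (0 : ℝ) < n := Nat.cast_pos.mpr hn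
    constructor <;> rw [one_sub_div hn'.ne', div_le_div_iff_of_pos_right hn'] <;> linarith
  exact tendsto_of_tendsto_of_tendsto_of_le_of_le' (hlim _) (hlim _) (hbounds.mono fun _ h => h.1)
    (hbounds.mono fun _ h => h.2)

/-- For ρ₀ = |ψ⟩⟨ψ| with |ψ⟩ = √p|0⟩+√(1-p)|1⟩, p ∈ (0,1), and
ρ₁ = ½I, the hypothesis testing relative entropy under ℤ₂-invariant measurements
satisfies lim_{n→∞} D_H^ε(Z[ρ₀^{⊗n}] ‖ Z[ρ₁^{⊗n}]) / n = 1, where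
D_H^ε = −log₂ β_n(ε) and β_n(ε) is the minimal type-II error probability. -/
theorem relative_entropy_rate_pure_vs_mixed (p ε : ℝ) (hp : p ∈ Set.Ioo (0 : ℝ) 1)
    (hε : ε ∈ Set.Ioo (0 : ℝ) 1) :
    Tendsto (fun n : ℕ =>
        (- Real.logb 2
          (sInf (errSet n (twirl (mpow n (projv (qubitR p)))) (twirl (mpow n mmix)) ε))) /
        (n : ℝ))
      atTop (nhds 1) := by
  obtain ⟨hp0, hp1⟩ := hp
  obtain ⟨hε0, hε1⟩ := hε
  have hψ := star_qubitR_dotProduct_self hp0.le hp1.le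
  have hZψ : star (pauliZ *ᵥ qubitR p) ⬝ᵥ (pauliZ *ᵥ qubitR p) = 1 := by
    rw [star_pauliZ_mulVec_dotProduct_pauliZ_mulVec, hψ]
  have hoverlap : Tendsto (fun n => |2 * p - 1| ^ n) atTop (nhds 0) :=
    tendsto_pow_atTop_nhds_zero_of_lt_one (abs_nonneg _) (by rw [abs_lt]; constructor <;> linarith)
  refine tendsto_neg_logb_div_of_mem_Icc (c₂ := 2) (sub_pos.mpr hε1) ?_
  filter_upwards [hoverlap.eventually (ge_mem_nhds hε0)] with n hn
  rw [twirl_mpow_projv, twirl_mpow_mmix]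
  refine sInf_errSet_mem_Icc ?_ ?_ ?_ (by positivity) <;>
    rw [star_tensorPowVec_dotProduct]
  · rw [hψ, one_pow]
  · rw [hZψ, one_pow]
  · rwa [star_qubitR_dotProduct_pauliZ_mulVec hp0.le hp1.le, norm_pow, Complex.norm_real,
      Real.norm_eq_abs]
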